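/- arXiv:0903.0154 — 5 statements merged into one kernel-verified Lean document; each statement's English description precedes it below -/
import Mathlib

section
/- Let Z ⊂ ℕ^ℕ be compact and downward closed (σ ∈ Z and τ_n ≤ σ_n for all n implies τ ∈ Z). Then K(Z,Γ) = {x ∈ {0,1}^{Γ×ℕ} : (N_n(x))_n ∈ Z} is a closed subset of {0,1}^{Γ×ℕ}, where N_n(x) = |{γ : x_{(γ,n)} = 1}|. -/
/-- For `Z ⊆ ℕ^ℕ` compact and downward closed, the set
`K(Z,Γ) = {x ∈ {0,1}^{Γ×ℕ} : (N_n(x))_n ∈ Z}` is closed in `{0,1}^{Γ×ℕ}`. -/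
theorem stmt6 (Γ : Type*) (Z : Set (ℕ → ℕ)) (hZ : IsCompact Z)
    (hdc : ∀ σ ∈ Z, ∀ τ : ℕ → ℕ, (∀ n, τ n ≤ σ n) → τ ∈ Z) :
    IsClosed {x : Γ × ℕ → Bool |
      ∃ σ ∈ Z, ∀ n : ℕ, {γ : Γ | x (γ, n) = true}.encard = (σ n : ℕ∞)} := by
  have hZcl : IsClosed Z := hZ.isClosed
  have hbd : ∀ n : ℕ, ∃ M : ℕ, ∀ σ ∈ Z, σ n ≤ M := by
    intro n
    obtain ⟨M, hM⟩ := (hZ.image (continuous_apply n)).bddAbove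
    exact ⟨M, fun σ hσ => hM ⟨σ, hσ, rfl⟩⟩
  choose M hM using hbd
  rw [← isOpen_compl_iff, isOpen_iff_mem_nhds]
  intro x hx
  by_cases hcase : ∀ n, ({γ : Γ | x (γ, n) = true}.encard ≤ (M n : ℕ∞))
  · -- every column finite and bounded; the function of cardinalities is not in Z
    set σ : ℕ → ℕ := fun n => ({γ : Γ | x (γ, n) = true}.encard).toNat with hσdef
    have hfin : ∀ n, {γ : Γ | x (γ, n) = true}.encard = (σ n : ℕ∞) := by
      intro n
      exact (ENat.coe_toNat (ne_top_of_le_ne_top (ENat.coe_ne_top (M n)) (hcase n))).symm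
    have hσZ : σ ∉ Z := fun h => hx ⟨σ, h, hfin⟩
    have hmem : Zᶜ ∈ nhds σ := hZcl.isOpen_compl.mem_nhds hσZ
    rw [nhds_pi, Filter.mem_pi] at hmem
    obtain ⟨I, hIfin, V, hV, hVsub⟩ := hmem
    have hVσ : ∀ i, σ i ∈ V i := by
      intro i
      have := hV i
      rw [nhds_discrete, Filter.mem_pure] at this
      exact this
    have hsupfin : ∀ n, ({γ : Γ | x (γ, n) = true}).Finite := by
      intro n
      exact Set.finite_of_encard_eq_coe (hfin n)
    -- the neighborhood
    set U : Set (Γ × ℕ → Bool) :=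
      ⋂ n ∈ I, ⋂ γ ∈ {γ : Γ | x (γ, n) = true}, {y | y (γ, n) = true} with hUdef
    have hUopen : IsOpen U := by
      apply hIfin.isOpen_biInter
      intro n _
      apply (hsupfin n).isOpen_biInter
      intro γ _
      have : Continuous fun y : Γ × ℕ → Bool => y (γ, n) := continuous_apply _
      exact (isOpen_discrete {true}).preimage this
    have hxU : x ∈ U := by
      simp only [hUdef, Set.mem_iInter, Set.mem_setOf_eq]
      intro n _ γ hγ
      exact hγ
    refine Filter.mem_of_superset (hUopen.mem_nhds hxU) ?_
    rintro y hy ⟨τ, hτZ, hτ⟩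
    have hmono : ∀ n ∈ I, σ n ≤ τ n := by
      intro n hn
      have hsub : {γ : Γ | x (γ, n) = true} ⊆ {γ : Γ | y (γ, n) = true} := by
        intro γ hγ
        simp only [hUdef, Set.mem_iInter, Set.mem_setOf_eq] at hy
        exact hy n hn γ hγ
      have := Set.encard_le_encard hsub
      rw [hfin n, hτ n] at this
      exact_mod_cast this
    set τ' : ℕ → ℕ := fun n => min (σ n) (τ n) with hτ'def
    have hτ'Z : τ' ∈ Z := hdc τ hτZ τ' (fun n => min_le_right _ _)
    have : τ' ∈ Set.pi I V := by
      intro i hi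
      have : τ' i = σ i := by
        simp only [hτ'def]
        exact min_eq_left (hmono i hi)
      rw [this]
      exact hVσ i
    exact hVsub this hτ'Z
  · -- some column is strictly bigger than the bound M n
    push_neg at hcase
    obtain ⟨n, hn⟩ := hcase
    have hle : ((M n : ℕ∞) + 1) ≤ {γ : Γ | x (γ, n) = true}.encard := Order.add_one_le_of_lt hn
    obtain ⟨F, hFsub, hFcard⟩ := Set.exists_subset_encard_eq hle
    have hFfin : F.Finite := by
      apply Set.finite_of_encard_eq_coe (k := M n + 1)
      rw [hFcard]; push_cast; ring
    set U : Set (Γ × ℕ → Bool) := ⋂ γ ∈ F, {y | y (γ, n) = true} with hUdef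
    have hUopen : IsOpen U := by
      apply hFfin.isOpen_biInter
      intro γ _
      have : Continuous fun y : Γ × ℕ → Bool => y (γ, n) := continuous_apply _
      exact (isOpen_discrete {true}).preimage this
    have hxU : x ∈ U := by
      simp only [hUdef, Set.mem_iInter, Set.mem_setOf_eq]
      intro γ hγ
      exact hFsub hγ
    refine Filter.mem_of_superset (hUopen.mem_nhds hxU) ?_
    rintro y hy ⟨τ, hτZ, hτ⟩
    have hsub : F ⊆ {γ : Γ | y (γ, n) = true} := by
      intro γ hγ
      simp only [hUdef, Set.mem_iInter, Set.mem_setOf_eq] at hy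
      exact hy γ hγ
    have h1 : ((M n : ℕ∞) + 1) ≤ (τ n : ℕ∞) := by
      rw [← hτ n, ← hFcard]
      exact Set.encard_le_encard hsub
    have h2 : τ n ≤ M n := hM n τ hτZ
    have h3 : (M n : ℕ∞) + 1 ≤ (M n : ℕ∞) := h1.trans (by exact_mod_cast h2)
    exact absurd ((ENat.add_one_le_iff (ENat.coe_ne_top _)).mp h3) (lt_irrefl _)
end

section
/- Let Z ⊂ ℕ^ℕ be compact and downward closed, with σ_n ≤ M_n for all σ ∈ Z. Let L_1 = Z × ∏_{m∈ℕ} ∏_{i=0}^{M_m} σ_i(Γ). Then the map g : L_1 → {0,1}^{Γ×ℕ} defined by g(z,x)_{(γ,m)} = x^{m, z(m)}_γ is a continuous surjection of L_1 onto K(Z,Γ) = {x ∈ {0,1}^{Γ×ℕ} : (N_n(x))_n ∈ Z}. -/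
lemma cont_of_discrete_switch {X Y D : Type*} [TopologicalSpace X] [TopologicalSpace Y]
    [TopologicalSpace D] [DiscreteTopology D] {f : X → D} (hf : Continuous f)
    {F : D → X → Y} (hF : ∀ d, Continuous (F d)) :
    Continuous (fun x => F (f x) x) := by
  rw [continuous_iff_continuousAt]
  intro x₀
  have hev : ∀ᶠ x in nhds x₀, f x = f x₀ :=
    Filter.eventually_iff.mpr
      ((hf.isOpen_preimage _ (isOpen_discrete {f x₀})).mem_nhds rfl)
  exact ((hF (f x₀)).continuousAt).congr
    (hev.mono fun x hx => by show F (f x₀) x = F (f x) x; rw [hx])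

/-- For `Z ⊆ ℕ^ℕ` compact and downward closed with `σ_n ≤ M_n` on `Z`, the map
`g : Z × ∏_m ∏_{i=0}^{M_m} σ_i(Γ) → {0,1}^{Γ×ℕ}`, `g(z,x)_{(γ,m)} = x^{m,z(m)}_γ`,
is a continuous surjection onto `K(Z,Γ)`. -/
theorem stmt11 (Γ : Type*) (Z : Set (ℕ → ℕ)) (hZc : IsCompact Z)
    (hdc : ∀ σ ∈ Z, ∀ τ : ℕ → ℕ, (∀ n, τ n ≤ σ n) → τ ∈ Z)
    (M : ℕ → ℕ) (hM : ∀ σ ∈ Z, ∀ n, σ n ≤ M n) :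
    ∃ g : (Z × ((m : ℕ) → (i : Fin (M m + 1)) →
            {x : Γ → Bool // {γ | x γ = true}.encard ≤ (i : ℕ)})) → (Γ × ℕ → Bool),
      Continuous g ∧
      Set.range g
        = {x : Γ × ℕ → Bool | ∃ σ ∈ Z, ∀ n, {γ : Γ | x (γ, n) = true}.encard = (σ n : ℕ∞)} ∧
      ∀ z x γ m, g (z, x) (γ, m) = (x m ⟨z.1 m, Nat.lt_succ_of_le (hM z.1 z.2 m)⟩).1 γ := by
  refine ⟨fun p q => (p.2 q.2 ⟨p.1.1 q.2, Nat.lt_succ_of_le (hM p.1.1 p.1.2 q.2)⟩).1 q.1,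
    ?_, ?_, fun z x γ m => rfl⟩
  · apply continuous_pi
    rintro ⟨γ, m⟩
    have : (fun p : Z × ((m : ℕ) → (i : Fin (M m + 1)) →
            {x : Γ → Bool // {γ | x γ = true}.encard ≤ (i : ℕ)}) =>
        (p.2 m ⟨p.1.1 m, Nat.lt_succ_of_le (hM p.1.1 p.1.2 m)⟩).1 γ)
        = fun p => (fun n (p : Z × ((m : ℕ) → (i : Fin (M m + 1)) →
            {x : Γ → Bool // {γ | x γ = true}.encard ≤ (i : ℕ)})) =>
          if h : n < M m + 1 then (p.2 m ⟨n, h⟩).1 γ else false) (p.1.1 m) p := by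
      funext p
      simp [Nat.lt_succ_of_le (hM p.1.1 p.1.2 m)]
    rw [this]
    refine cont_of_discrete_switch
      (f := fun p : Z × ((m : ℕ) → (i : Fin (M m + 1)) →
            {x : Γ → Bool // {γ | x γ = true}.encard ≤ (i : ℕ)}) => p.1.1 m)
      (F := fun n p => if h : n < M m + 1 then (p.2 m ⟨n, h⟩).1 γ else false)
      ((continuous_apply m).comp (continuous_subtype_val.comp continuous_fst)) fun n => ?_
    by_cases h : n < M m + 1
    · simp only [dif_pos h]
      have c2 : Continuous fun p : Z × ((m : ℕ) → (i : Fin (M m + 1)) →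
            {x : Γ → Bool // {γ | x γ = true}.encard ≤ (i : ℕ)}) => p.2 m :=
        (continuous_apply m).comp continuous_snd
      have c3 : Continuous fun p : Z × ((m : ℕ) → (i : Fin (M m + 1)) →
            {x : Γ → Bool // {γ | x γ = true}.encard ≤ (i : ℕ)}) =>
          p.2 m ⟨n, h⟩ := (continuous_apply (⟨n, h⟩ : Fin (M m + 1))).comp c2
      have c4 : Continuous fun p : Z × ((m : ℕ) → (i : Fin (M m + 1)) →
            {x : Γ → Bool // {γ | x γ = true}.encard ≤ (i : ℕ)}) =>
          (p.2 m ⟨n, h⟩).1 := continuous_subtype_val.comp c3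
      exact (continuous_apply γ).comp c4
    · simp only [dif_neg h]; exact continuous_const
  · ext y
    constructor
    · rintro ⟨⟨z, x⟩, rfl⟩
      have hfin : ∀ n, {γ : Γ | (x n ⟨z.1 n, Nat.lt_succ_of_le (hM z.1 z.2 n)⟩).1 γ = true}.encard
          ≤ (z.1 n : ℕ∞) := fun n =>
        (x n ⟨z.1 n, Nat.lt_succ_of_le (hM z.1 z.2 n)⟩).2
      set τ : ℕ → ℕ := fun n =>
        ({γ : Γ | (x n ⟨z.1 n, Nat.lt_succ_of_le (hM z.1 z.2 n)⟩).1 γ = true}.encard).toNat with hτ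
      have hne : ∀ n, {γ : Γ | (x n ⟨z.1 n, Nat.lt_succ_of_le (hM z.1 z.2 n)⟩).1 γ = true}.encard
          ≠ ⊤ := fun n => ne_top_of_le_ne_top (by simp) (hfin n)
      refine ⟨τ, hdc z.1 z.2 τ fun n => ?_, fun n => ?_⟩
      · have h1 : (τ n : ℕ∞) ≤ (z.1 n : ℕ∞) := by
          rw [hτ]; rw [ENat.coe_toNat (hne n)]; exact hfin n
        exact_mod_cast h1
      · simp only [Set.mem_setOf_eq]
        rw [hτ]
        exact (ENat.coe_toNat (hne n)).symm
    · rintro ⟨σ, hσ, hcard⟩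
      refine ⟨⟨⟨σ, hσ⟩, fun m i => ⟨fun γ => if (i : ℕ) = σ m then y (γ, m) else false, ?_⟩⟩, ?_⟩
      · by_cases h : (i : ℕ) = σ m
        · simp only [h, if_true]
          exact le_of_eq (hcard m)
        · simp [h]
      · funext ⟨γ, m⟩
        simp
end

section
/- For every set Γ and 1 < p < ∞, the compact space B(Γ) = {x ∈ [-1,1]^Γ : ∑_γ |x_γ| ≤ 1} (equivalently, the unit ball of ℓ_p(Γ) in its weak topology) is a continuous image of σ_1(Γ)^ℕ. -/
/-!
Listing the support of `y ∈ B(Γ)` by decreasing `|y γ|` puts each `γ` at a position `n` with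
`|y γ| ≤ 1 / (n + 1)`. Hence `y γ = v n` for the first `n` with `γ ∈ U n`, where
`U : ℕ → σ₁(Γ)` lists the support and `v` lies in the compact metrizable set of sequences with
`|v n| ≤ 1 / (n + 1)` and `∑ |v n| ≤ 1`. For fixed `γ` at most one term of that series is nonzero
and the `n`-th is at most `1 / (n + 1)`, so the series converges uniformly and the map
`(U, v) ↦ y` is continuous. By the Hausdorff–Alexandroff theorem the set of weights `v` is a
continuous image of `ℕ → Bool`, and `ℕ → Bool` is one of `σ₁(Γ)^ℕ` via `{γ₀}` and `∅`.
-/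

open scoped ENNReal Topology
open Function Set Filter

noncomputable section

theorem exists_tsum_eq_of_subsingleton_support {α β : Type*} [AddCommMonoid α]
    [TopologicalSpace α] [Nonempty β] {f : β → α} (hf : (support f).Subsingleton) :
    ∃ b, ∑' x, f x = f b := by
  rcases hf.eq_empty_or_singleton with h | ⟨b, hb⟩
  · obtain rfl := support_eq_empty_iff.1 h
    exact ⟨Classical.arbitrary β, by simp⟩
  · refine ⟨b, tsum_eq_single b fun b' hb' => ?_⟩
    rw [← notMem_support, hb]
    exact hb'

/-- Only one term survives at each point, so the tail from `N` on is bounded by `c N` uniformly. -/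
theorem continuous_tsum_of_subsingleton_support {X : Type*} [TopologicalSpace X]
    {f : X → ℕ → ℝ} {c : ℕ → ℝ} (hf : ∀ n, Continuous (f · n))
    (hsupp : ∀ x, (support (f x)).Subsingleton) (hfc : ∀ x n, |f x n| ≤ c n)
    (hc : Antitone c) (hc0 : Tendsto c atTop (𝓝 0)) :
    Continuous fun x => ∑' n, f x n := by
  refine TendstoUniformly.continuous (p := atTop) (F := fun N x => ∑ n ∈ Finset.range N, f x n) ?_
    (Eventually.of_forall fun N => continuous_finsetSum _ fun n _ => hf n).frequently
  rw [Metric.tendstoUniformly_iff]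
  intro ε hε
  filter_upwards [hc0.eventually (gt_mem_nhds hε)] with N hN x
  have htail : ∑' n, f x n - ∑ n ∈ Finset.range N, f x n = ∑' k, f x (k + N) := by
    rw [← (summable_of_hasFiniteSupport (hsupp x).finite).sum_add_tsum_nat_add N]
    ring
  obtain ⟨k, hk⟩ := exists_tsum_eq_of_subsingleton_support (f := fun k => f x (k + N))
    fun a ha b hb => by simpa using hsupp x ha hb
  rw [Real.dist_eq, htail, hk]
  exact ((hfc x _).trans (hc (Nat.le_add_left N k))).trans_lt hN

namespace SigmaOneImage

variable {Γ : Type*}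

def firstHitTimes (U : ℕ → Γ → Bool) (γ : Γ) : Set ℕ :=
  {n | U n γ = true ∧ ∀ m < n, U m γ = false}

theorem subsingleton_firstHitTimes (U : ℕ → Γ → Bool) (γ : Γ) :
    (firstHitTimes U γ).Subsingleton := by
  intro m hm n hn
  by_contra hne
  rcases lt_or_gt_of_ne hne with h | h
  · simpa [hm.1] using hn.2 m h
  · simpa [hn.1] using hm.2 n h

theorem firstHitTimes_eq {U : ℕ → Γ → Bool} {γ : Γ} (hU : {n | U n γ = true}.Subsingleton) :
    firstHitTimes U γ = {n | U n γ = true} := by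
  refine Subset.antisymm (fun n hn => hn.1) fun n hn => ⟨hn, fun m hm => ?_⟩
  by_contra hmt
  exact hm.ne (hU (Bool.eq_true_of_not_eq_false hmt) hn)

theorem isClopen_setOf_mem_firstHitTimes {X : Type*} [TopologicalSpace X]
    {U : X → ℕ → Γ → Bool} (hU : Continuous U) (γ : Γ) (n : ℕ) :
    IsClopen {x | n ∈ firstHitTimes (U x) γ} := by
  have hcoord : ∀ m b, IsClopen {x | U x m γ = b} := fun m b =>
    (isClopen_discrete {b}).preimage (by fun_prop)
  have : {x | n ∈ firstHitTimes (U x) γ} =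
      {x | U x n γ = true} ∩ ⋂ m ∈ Finset.range n, {x | U x m γ = false} := by
    ext x; simp [firstHitTimes]
  rw [this]
  exact (hcoord n true).inter (isClopen_biInter_finset fun m _ => hcoord m false)

def firstHitSum (U : ℕ → Γ → Bool) (v : ℕ → ℝ) (γ : Γ) : ℝ :=
  ∑' n, (firstHitTimes U γ).indicator v n

theorem subsingleton_support_indicator_firstHitTimes (U : ℕ → Γ → Bool) (v : ℕ → ℝ) (γ : Γ) :
    (support ((firstHitTimes U γ).indicator v)).Subsingleton :=
  (subsingleton_firstHitTimes U γ).anti support_indicator_subset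

theorem continuous_firstHitSum {X : Type*} [TopologicalSpace X] {U : X → ℕ → Γ → Bool}
    {v : X → ℕ → ℝ} (hU : Continuous U) (hv : Continuous v)
    (hv_le : ∀ x n, |v x n| ≤ 1 / ((n : ℝ) + 1)) (γ : Γ) :
    Continuous fun x => firstHitSum (U x) (v x) γ := by
  refine continuous_tsum_of_subsingleton_support (fun n => ?_)
    (fun x => subsingleton_support_indicator_firstHitTimes _ _ γ) (fun x n => ?_)
    (fun m n hmn => ?_) tendsto_one_div_add_atTop_nhds_zero_nat
  · exact (isClopen_setOf_mem_firstHitTimes hU γ n).continuous_indicator (by fun_prop)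
  · simp only [← Real.norm_eq_abs] at hv_le ⊢
    exact (norm_indicator_le_norm_self _ _).trans (hv_le x n)
  · gcongr

theorem tsum_ofReal_abs_firstHitSum_le {U : ℕ → Γ → Bool}
    (hU : ∀ n, {γ | U n γ = true}.encard ≤ 1) (v : ℕ → ℝ) :
    ∑' γ, ENNReal.ofReal |firstHitSum U v γ| ≤ ∑' n, ENNReal.ofReal |v n| := by
  calc ∑' γ, ENNReal.ofReal |firstHitSum U v γ|
      ≤ ∑' γ, ∑' n, ENNReal.ofReal |(firstHitTimes U γ).indicator v n| := by
        refine ENNReal.tsum_le_tsum fun γ => ?_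
        obtain ⟨n, hn⟩ := exists_tsum_eq_of_subsingleton_support
          (subsingleton_support_indicator_firstHitTimes U v γ)
        rw [firstHitSum, hn]
        exact ENNReal.le_tsum n
    _ = ∑' n, ∑' γ, ENNReal.ofReal |(firstHitTimes U γ).indicator v n| := ENNReal.tsum_comm
    _ ≤ ∑' n, ∑' γ, {γ | U n γ = true}.indicator (fun _ => ENNReal.ofReal |v n|) γ := by
        refine ENNReal.tsum_le_tsum fun n => ENNReal.tsum_le_tsum fun γ => ?_
        by_cases h : n ∈ firstHitTimes U γ
        · rw [indicator_of_mem h, indicator_of_mem (show γ ∈ {γ | U n γ = true} from h.1)]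
        · simp [indicator_of_notMem h]
    _ ≤ ∑' n, ENNReal.ofReal |v n| := by
        refine ENNReal.tsum_le_tsum fun n => ?_
        rw [← tsum_subtype, ENNReal.tsum_set_const]
        exact mul_le_of_le_one_left' (by exact_mod_cast hU n)

theorem finite_setOf_le_abs {y : Γ → ℝ} (hy : ∑' γ, ENNReal.ofReal |y γ| ≤ 1) {a : ℝ}
    (ha : 0 < a) : {γ | a ≤ |y γ|}.Finite := by
  have h := ENNReal.finite_const_le_of_tsum_ne_top (hy.trans_lt ENNReal.one_lt_top).ne
    (ENNReal.ofReal_pos.2 ha).ne'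
  simpa [ENNReal.ofReal_le_ofReal_iff (abs_nonneg _)] using h

theorem sum_abs_le_one {y : Γ → ℝ} (hy : ∑' γ, ENNReal.ofReal |y γ| ≤ 1) (s : Finset Γ) :
    ∑ γ ∈ s, |y γ| ≤ 1 := by
  rw [← ENNReal.ofReal_le_one, ENNReal.ofReal_sum_of_nonneg fun γ _ => abs_nonneg _]
  exact (ENNReal.sum_le_tsum s).trans hy

/-- List the support of `y` by decreasing `|y γ|`, ties broken through `embeddingToCardinal`, and
let `e γ` be the position of `γ`: the `e γ + 1` terms up to `γ` are all `≥ |y γ|`, so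
`|y γ| ≤ 1 / (e γ + 1)`. -/
theorem exists_injOn_abs_le_one_div {y : Γ → ℝ} (hy : ∑' γ, ENNReal.ofReal |y γ| ≤ 1) :
    ∃ e : Γ → ℕ, InjOn e (support y) ∧ ∀ γ, |y γ| ≤ 1 / ((e γ : ℝ) + 1) := by
  let _ : LinearOrder Γ :=
    LinearOrder.lift' (fun γ => toLex (OrderDual.toDual |y γ|, embeddingToCardinal γ))
      fun a b h => embeddingToCardinal.injective (congrArg (fun p => (ofLex p).2) h)
  have hle : ∀ {a b : Γ}, a ≤ b → |y b| ≤ |y a| := fun h => Prod.Lex.monotone_fst _ _ h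
  have hIic : ∀ γ ∈ support y, (Iic γ).Finite := fun γ hγ =>
    (finite_setOf_le_abs hy (abs_pos.2 hγ)).subset fun γ' h => hle h
  refine ⟨fun γ => (Iio γ).ncard, StrictMonoOn.injOn fun a _ b hb hab =>
    ncard_lt_ncard (Iio_ssubset_Iio hab) ((hIic b hb).subset Iio_subset_Iic_self), fun γ => ?_⟩
  rcases eq_or_ne (y γ) 0 with h0 | hγ
  · rw [h0, abs_zero]; positivity
  have hcard : (hIic γ hγ).toFinset.card = (Iio γ).ncard + 1 := by
    rw [← ncard_eq_toFinset_card _ (hIic γ hγ), ← Iio_insert,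
      ncard_insert_of_notMem self_notMem_Iio ((hIic γ hγ).subset Iio_subset_Iic_self)]
  have hsum : ((Iio γ).ncard + 1 : ℝ) * |y γ| ≤ 1 := by
    calc ((Iio γ).ncard + 1 : ℝ) * |y γ| = (hIic γ hγ).toFinset.card • |y γ| := by
          rw [hcard, nsmul_eq_mul]; push_cast; ring
      _ ≤ ∑ γ' ∈ (hIic γ hγ).toFinset, |y γ'| :=
          Finset.card_nsmul_le_sum _ _ _ fun γ' h => hle ((hIic γ hγ).mem_toFinset.1 h)
      _ ≤ 1 := sum_abs_le_one hy _
  exact (le_div_iff₀' (by positivity)).2 hsum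

def weights : Set (ℕ → ℝ) :=
  {v | (∀ n, |v n| ≤ 1 / ((n : ℝ) + 1)) ∧ ∑' n, ENNReal.ofReal |v n| ≤ 1}

theorem isCompact_weights : IsCompact weights := by
  refine (isCompact_univ_pi fun n => isCompact_Icc).of_isClosed_subset ?_
    fun v hv n _ => abs_le.1 (hv.1 n)
  rw [weights, ofPred_and, ofPred_forall]
  refine (isClosed_iInter fun n => isClosed_le (f := fun v : ℕ → ℝ => |v n|) (by fun_prop)
    continuous_const).inter ?_
  exact (lowerSemicontinuous_tsum fun n =>
    (ENNReal.continuous_ofReal.comp (by fun_prop)).lowerSemicontinuous).isClosed_preimage 1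

theorem exists_continuous_surjective_nat_bool_weights :
    ∃ κ : (ℕ → Bool) → weights, Continuous κ ∧ Surjective κ := by
  have : CompactSpace weights := isCompact_iff_compactSpace.1 isCompact_weights
  have : Nonempty weights := ⟨⟨0, fun n => by simp; positivity, by simp⟩⟩
  let _ := TopologicalSpace.metrizableSpaceMetric weights
  exact exists_nat_bool_continuous_surjective_of_compact weights

abbrev SigmaOne (Γ : Type*) := {x : Γ → Bool // {γ | x γ = true}.encard ≤ 1}

abbrev L1Ball (Γ : Type*) := {y : Γ → ℝ // (∀ γ, |y γ| ≤ 1) ∧ ∑' γ, ENNReal.ofReal |y γ| ≤ 1}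

theorem abs_le_one_of_tsum_ofReal_abs_le_one {y : Γ → ℝ} (hy : ∑' γ, ENNReal.ofReal |y γ| ≤ 1)
    (γ : Γ) : |y γ| ≤ 1 :=
  ENNReal.ofReal_le_one.1 ((ENNReal.le_tsum γ).trans hy)

def ballMap (p : (ℕ → SigmaOne Γ) × weights) : L1Ball Γ :=
  have hsum := (tsum_ofReal_abs_firstHitSum_le (fun n => (p.1 n).2) p.2.1).trans p.2.2.2
  ⟨firstHitSum (fun n => (p.1 n).1) p.2, abs_le_one_of_tsum_ofReal_abs_le_one hsum, hsum⟩

theorem continuous_ballMap : Continuous (ballMap (Γ := Γ)) :=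
  .subtype_mk (continuous_pi fun γ => continuous_firstHitSum (by fun_prop) (by fun_prop)
    (fun p => p.2.2.1) γ) _


theorem surjective_ballMap : Surjective (ballMap (Γ := Γ)) := by
  classical
  rintro ⟨y, -, hy⟩
  obtain ⟨e, he_inj, he_le⟩ := exists_injOn_abs_le_one_div hy
  let U : ℕ → Γ → Bool := fun n γ => decide (y γ ≠ 0 ∧ e γ = n)
  have hU_time : ∀ γ, {n | U n γ = true}.Subsingleton := fun γ m hm n hn => by
    simp only [U, mem_ofPred_eq, decide_eq_true_eq] at hm hn
    exact hm.2.symm.trans hn.2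
  have hU_point : ∀ n, {γ | U n γ = true}.encard ≤ 1 := fun n => by
    refine encard_le_one_iff_subsingleton.2 fun a ha b hb => ?_
    simp only [U, mem_ofPred_eq, decide_eq_true_eq] at ha hb
    exact he_inj ha.1 hb.1 (ha.2.trans hb.2.symm)
  let v : ℕ → ℝ := extend ((support y).domRestrict e) ((support y).domRestrict y) 0
  have hv : ∀ γ ∈ support y, v (e γ) = y γ := fun γ hγ =>
    he_inj.injective.extend_apply _ _ ⟨γ, hγ⟩
  have hv_mem : v ∈ weights := by
    refine ⟨fun n => ?_, ?_⟩
    · by_cases hn : ∃ γ : support y, e γ = n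
      · obtain ⟨⟨γ, hγ⟩, rfl⟩ := hn
        rw [hv γ hγ]
        exact he_le γ
      · rw [show v n = 0 from extend_apply' _ _ n hn, abs_zero]
        positivity
    · calc ∑' n, ENNReal.ofReal |v n|
          = ∑' n, extend ((support y).domRestrict e) (fun γ => ENNReal.ofReal |y γ|) 0 n := by
            congr 1; ext n
            rw [apply_extend (fun r => ENNReal.ofReal |r|)]
            simp [Function.comp_def, Pi.zero_def]
        _ = ∑' γ : support y, ENNReal.ofReal |y γ| := tsum_extend_zero he_inj.injective _
        _ ≤ ∑' γ, ENNReal.ofReal |y γ| :=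
            ENNReal.tsum_comp_le_tsum_of_injective Subtype.val_injective _
        _ ≤ 1 := hy
  refine ⟨(fun n => ⟨U n, hU_point n⟩, ⟨v, hv_mem⟩), Subtype.ext (funext fun γ => ?_)⟩
  change ∑' n, (firstHitTimes U γ).indicator v n = y γ
  rw [firstHitTimes_eq (hU_time γ)]
  by_cases hγ : y γ = 0
  · simp [U, hγ]
  · rw [tsum_eq_single (e γ) fun n hn => indicator_of_notMem (by simpa [U, hγ] using hn) _,
      indicator_of_mem (by simp [U, hγ]), hv γ hγ]

instance : Inhabited (SigmaOne Γ) := ⟨⟨fun _ => false, by simp⟩⟩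

theorem surjective_sigmaOne_eval (γ₀ : Γ) : Surjective fun x : SigmaOne Γ => x.1 γ₀ := by
  classical
  refine fun b => ⟨⟨fun γ => b && decide (γ = γ₀), ?_⟩, by simp⟩
  exact encard_le_one_iff_subsingleton.2 fun a ha c hc => by simp_all

theorem exists_continuous_surjective_prod_nat_bool (γ₀ : Γ) :
    ∃ σ : (ℕ → SigmaOne Γ) → (ℕ → SigmaOne Γ) × (ℕ → Bool), Continuous σ ∧ Surjective σ := by
  let h := (Homeomorph.piCongrLeft (Y := fun _ => SigmaOne Γ) Equiv.natSumNatEquivNat).symm.trans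
    Homeomorph.sumArrowHomeomorphProdArrow
  refine ⟨Prod.map id (fun q n => (q n).1 γ₀) ∘ h,
    (continuous_id.prodMap (continuous_pi fun n =>
      (continuous_apply γ₀).comp (continuous_subtype_val.comp (continuous_apply n)))).comp
      h.continuous, ?_⟩
  exact (surjective_id.prodMap (surjective_sigmaOne_eval γ₀).comp_left).comp h.surjective

end SigmaOneImage

end

theorem stmt12_general (Γ : Type*) :
    ∃ f : (ℕ → {x : Γ → Bool // {γ | x γ = true}.encard ≤ 1}) →
          {y : Γ → ℝ // (∀ γ, |y γ| ≤ 1) ∧ ∑' γ, ENNReal.ofReal |y γ| ≤ 1},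
      Continuous f ∧ Function.Surjective f := by
  rcases isEmpty_or_nonempty Γ with hΓ | ⟨⟨γ₀⟩⟩
  · exact ⟨fun _ => ⟨0, by simp, by simp⟩, continuous_const,
      fun y => ⟨default, Subsingleton.elim _ _⟩⟩
  obtain ⟨σ, hσ_cont, hσ_surj⟩ := SigmaOneImage.exists_continuous_surjective_prod_nat_bool γ₀
  obtain ⟨κ, hκ_cont, hκ_surj⟩ :=
    SigmaOneImage.exists_continuous_surjective_nat_bool_weights
  exact ⟨SigmaOneImage.ballMap ∘ Prod.map id κ ∘ σ,
    SigmaOneImage.continuous_ballMap.comp ((continuous_id.prodMap hκ_cont).comp hσ_cont),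
    SigmaOneImage.surjective_ballMap.comp ((surjective_id.prodMap hκ_surj).comp hσ_surj)⟩

/-- For every set `Γ` and `1 < p < ∞`, the compact space
`B(Γ) = {x ∈ [-1,1]^Γ : ∑_γ |x_γ| ≤ 1}` (the unit ball of `ℓ_p(Γ)` in its weak topology)
is a continuous image of `σ_1(Γ)^ℕ`. -/
theorem stmt12 (Γ : Type*) (p : ℝ≥0∞) (hp : 1 < p) (hp' : p ≠ ⊤) :
    ∃ f : (ℕ → {x : Γ → Bool // {γ | x γ = true}.encard ≤ 1}) →
          {y : Γ → ℝ // (∀ γ, |y γ| ≤ 1) ∧ ∑' γ, ENNReal.ofReal |y γ| ≤ 1},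
      Continuous f ∧ Function.Surjective f :=
  stmt12_general Γ
end

section
/- With K the closed unit ball of the norm ‖(x,y)‖' = sup{‖x‖_p, ‖y‖_p, |x_α|+|y_β| : (α,β) ∈ G} on ℓ_p(Γ)², and 1 < ξ ≤ 2^{1−1/p}: if (α,β) ∉ G then the element (x,y) with x_α = x_β = y_α = y_β = 2^{−1/p} and all other coordinates 0 lies in K and satisfies |x_α|+|y_α| > ξ−ε and |x_β|+|y_β| > ξ−ε for appropriate ξ; conversely, if (α,β) ∈ G (α ≠ β) then no (x,y) ∈ K satisfies both |x_α|+|y_α| > ξ₁ and |x_β|+|y_β| > ξ₁ for any ξ₁ > 1. -/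
open Cardinal
open scoped ENNReal Classical

/-!
For injective `φ`, membership of `(α, β)` in `G` does not change under swapping the pair, and `G`
misses the diagonal. So if `(α, β) ∉ G`, no pair of `G` has both entries in `{α, β}`, and each
cross term `|x_i| + |y_j|` of the vector with value `2^{-1/p}` on `{α, β}` has at most one nonzero
summand, while its `ℓ_p` norm is at most `1`. If `(α, β) ∈ G`, then `(β, α) ∈ G` too, and the
cross terms `|x_α| + |y_β|` and `|x_β| + |y_α|` are each at most `1`, whereas their sum is
`(|x_α| + |y_α|) + (|x_β| + |y_β|) > 2`.
-/

theorem Function.Injective.lt_iff_le_iff_swap {W X : Type*} [LinearOrder W] [LinearOrder X]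
    {φ : W → X} (hφ : Function.Injective φ) (a b : W) :
    (φ b < φ a ↔ b ≤ a) ↔ (φ a < φ b ↔ a ≤ b) := by
  rcases lt_trichotomy a b with h | rfl | h
  · have := (hφ.ne h.ne).lt_or_gt
    grind
  · simp
  · have := (hφ.ne h.ne).lt_or_gt
    grind

section OrderAgreement

variable {W X : Type*} [LinearOrder W] [LinearOrder X] {φ : W → X}

def orderAgreement (φ : W → X) : Set (W × W) := {q | φ q.1 < φ q.2 ↔ q.1 ≤ q.2}

theorem swap_mem_orderAgreement (hφ : Function.Injective φ) {q : W × W} :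
    q.swap ∈ orderAgreement φ ↔ q ∈ orderAgreement φ :=
  hφ.lt_iff_le_iff_swap q.1 q.2

theorem diag_notMem_orderAgreement (a : W) : (a, a) ∉ orderAgreement φ := by
  simp [orderAgreement]

theorem notMem_pair_of_mem_orderAgreement (hφ : Function.Injective φ) {a b : W}
    (hab : (a, b) ∉ orderAgreement φ) {i j : W} (hij : (i, j) ∈ orderAgreement φ) :
    i ∉ ({a, b} : Set W) ∨ j ∉ ({a, b} : Set W) := by
  have hba : (b, a) ∉ orderAgreement φ := (swap_mem_orderAgreement hφ (q := (a, b))).not.mpr hab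
  by_contra! ⟨hi, hj⟩
  rcases hi with rfl | rfl <;> rcases hj with rfl | rfl
  exacts [diag_notMem_orderAgreement _ hij, hab hij, hba hij, diag_notMem_orderAgreement _ hij]

end OrderAgreement

section PairNorm

variable {Γ W : Type*} {p : ℝ≥0∞} [Fact (1 ≤ p)]

noncomputable def pairNorm (S : Set (W × W)) (e : W → Γ) (x y : lp (fun _ : Γ => ℝ) p) : ℝ :=
  sSup ({‖x‖, ‖y‖} ∪ {t : ℝ | ∃ q ∈ S, t = |x.1 (e q.1)| + |y.1 (e q.2)|})

variable {S : Set (W × W)} {e : W → Γ} {x y : lp (fun _ : Γ => ℝ) p}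

theorem add_le_pairNorm {q : W × W} (hq : q ∈ S) :
    |x.1 (e q.1)| + |y.1 (e q.2)| ≤ pairNorm S e x y := by
  have hp : p ≠ 0 := (zero_lt_one.trans_le Fact.out).ne'
  refine le_csSup ⟨‖x‖ + ‖y‖, ?_⟩ (Or.inr ⟨q, hq, rfl⟩)
  rintro t ((rfl | rfl) | ⟨q', -, rfl⟩)
  · exact le_add_of_nonneg_right (norm_nonneg y)
  · exact le_add_of_nonneg_left (norm_nonneg x)
  · exact add_le_add (lp.norm_apply_le_norm hp x _) (lp.norm_apply_le_norm hp y _)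

theorem pairNorm_le {r : ℝ} (hx : ‖x‖ ≤ r) (hy : ‖y‖ ≤ r)
    (hS : ∀ q ∈ S, |x.1 (e q.1)| + |y.1 (e q.2)| ≤ r) : pairNorm S e x y ≤ r := by
  refine Real.sSup_le ?_ ((norm_nonneg x).trans hx)
  rintro t ((rfl | rfl) | ⟨q, hq, rfl⟩)
  exacts [hx, hy, hS q hq]

end PairNorm

section PairVec

variable {Γ : Type*} {p : ℝ≥0∞}

variable (p) in
noncomputable def pairVec (a b : Γ) (c : ℝ) : lp (fun _ : Γ => ℝ) p :=
  ⟨fun γ => if γ = a ∨ γ = b then c else 0,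
    (memℓp_zero ((Set.toFinite {a, b}).subset fun γ hγ => by
      by_contra h; exact hγ (if_neg h))).of_exponent_ge zero_le⟩

theorem pairVec_apply (a b : Γ) (c : ℝ) (γ : Γ) :
    (pairVec p a b c).1 γ = if γ = a ∨ γ = b then c else 0 := rfl

@[simp]
theorem pairVec_apply_left (a b : Γ) (c : ℝ) : (pairVec p a b c).1 a = c :=
  if_pos (Or.inl rfl)

@[simp]
theorem pairVec_apply_right (a b : Γ) (c : ℝ) : (pairVec p a b c).1 b = c :=
  if_pos (Or.inr rfl)

theorem abs_pairVec_le {c : ℝ} (hc : 0 ≤ c) (a b γ : Γ) : |(pairVec p a b c).1 γ| ≤ c := by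
  rw [pairVec_apply]; split_ifs <;> simp [abs_of_nonneg hc, hc]

theorem abs_add_abs_pairVec_le {c : ℝ} (hc : 0 ≤ c) {a b i j : Γ}
    (h : i ∉ ({a, b} : Set Γ) ∨ j ∉ ({a, b} : Set Γ)) :
    |(pairVec p a b c).1 i| + |(pairVec p a b c).1 j| ≤ c := by
  rcases h with h | h <;> simp only [Set.mem_insert_iff, Set.mem_singleton_iff] at h
  · simpa [pairVec_apply, h] using abs_pairVec_le (p := p) hc a b j
  · simpa [pairVec_apply, h] using abs_pairVec_le (p := p) hc a b i

/-- Each of the two coordinates contributes `(2^{-1/p})^p = 1/2`; for `p = ∞` the value is `1`,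
because `ENNReal.toReal ∞ = 0` and `1 / 0 = 0`. -/
theorem norm_pairVec_le_one [Fact (1 ≤ p)] (a b : Γ) :
    ‖pairVec p a b ((2 : ℝ) ^ (-(1 / p.toReal)))‖ ≤ 1 := by
  set c : ℝ := (2 : ℝ) ^ (-(1 / p.toReal))
  have hc : 0 ≤ c := by positivity
  rcases eq_or_ne p ∞ with rfl | hp
  · refine lp.norm_le_of_forall_le zero_le_one fun γ => ?_
    simpa [c] using abs_pairVec_le (p := ∞) hc a b γ
  have hpt : 0 < p.toReal := ENNReal.toReal_pos (zero_lt_one.trans_le Fact.out).ne' hp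
  have hcp : c ^ p.toReal = 1 / 2 := by
    rw [← Real.rpow_mul zero_le_two, neg_mul, one_div_mul_cancel hpt.ne', Real.rpow_neg_one,
      one_div]
  refine lp.norm_le_of_tsum_le hpt zero_le_one ?_
  rw [tsum_eq_sum (s := {a, b}) fun γ hγ => by simp_all [pairVec_apply, hpt.ne']]
  rcases eq_or_ne a b with rfl | hab
  · norm_num [pairVec_apply, abs_of_nonneg hc, hcp]
  · rw [Finset.sum_pair hab]
    norm_num [pairVec_apply, abs_of_nonneg hc, hcp]

end PairVec

theorem pairNorm_orderAgreement_pairVec_le_one {Γ W : Type*} [LinearOrder W] {p : ℝ≥0∞}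
    [Fact (1 ≤ p)] {φ : W → ℝ} (hφ : Function.Injective φ) (e : W ↪ Γ) {a b : W}
    (hab : (a, b) ∉ orderAgreement φ) :
    let x := pairVec p (e a) (e b) ((2 : ℝ) ^ (-(1 / p.toReal)))
    pairNorm (orderAgreement φ) e x x ≤ 1 := by
  have hc : (0 : ℝ) ≤ 2 ^ (-(1 / p.toReal)) := by positivity
  have hc1 : (2 : ℝ) ^ (-(1 / p.toReal)) ≤ 1 :=
    Real.rpow_le_one_of_one_le_of_nonpos one_le_two (by simp)
  refine pairNorm_le (norm_pairVec_le_one _ _) (norm_pairVec_le_one _ _) fun q hq => ?_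
  refine (abs_add_abs_pairVec_le hc ?_).trans hc1
  simpa only [← Set.image_pair, e.injective.mem_set_image]
    using notMem_pair_of_mem_orderAgreement hφ hab hq

theorem two_rpow_neg_add_self (t : ℝ) : (2 : ℝ) ^ (-t) + 2 ^ (-t) = 2 ^ (1 - t) := by
  rw [sub_eq_add_neg, Real.rpow_add two_pos, Real.rpow_one]
  ring

theorem stmt16_general (Γ : Type*) (p : ℝ≥0∞) [Fact (1 ≤ p)]
    (W : Type*) [LinearOrder W] (e : W ↪ Γ)
    (φ : W → ℝ) (hφ : Function.Injective φ)
    (G : Set (W × W)) (hG : G = {q : W × W | φ q.1 < φ q.2 ↔ q.1 ≤ q.2})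
    (N : lp (fun _ : Γ => ℝ) p → lp (fun _ : Γ => ℝ) p → ℝ)
    (hN : ∀ x y, N x y
      = sSup ({‖x‖, ‖y‖} ∪ {t : ℝ | ∃ q ∈ G, t = |x.1 (e q.1)| + |y.1 (e q.2)|}))
    (α β : W) :
    ((α, β) ∉ G →
      ∃ x y : lp (fun _ : Γ => ℝ) p,
        N x y ≤ 1 ∧
        (∀ γ, x.1 γ = if γ = e α ∨ γ = e β then (2 : ℝ) ^ (-(1 / p.toReal)) else 0) ∧
        (∀ γ, y.1 γ = if γ = e α ∨ γ = e β then (2 : ℝ) ^ (-(1 / p.toReal)) else 0) ∧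
        |x.1 (e α)| + |y.1 (e α)| = (2 : ℝ) ^ (1 - 1 / p.toReal) ∧
        |x.1 (e β)| + |y.1 (e β)| = (2 : ℝ) ^ (1 - 1 / p.toReal) ∧
        ∀ ξ : ℝ, ξ < (2 : ℝ) ^ (1 - 1 / p.toReal) →
          ξ < |x.1 (e α)| + |y.1 (e α)| ∧ ξ < |x.1 (e β)| + |y.1 (e β)|) ∧
    ((α, β) ∈ G → ∀ ξ₁ : ℝ, 1 < ξ₁ →
      ¬ ∃ x y : lp (fun _ : Γ => ℝ) p,
        N x y ≤ 1 ∧ ξ₁ < |x.1 (e α)| + |y.1 (e α)| ∧ ξ₁ < |x.1 (e β)| + |y.1 (e β)|) := by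
  change G = orderAgreement φ at hG
  obtain rfl : N = pairNorm G e := funext fun x => funext fun y => hN x y
  subst hG
  constructor
  · intro hαβ
    have hcc :
        |(2 : ℝ) ^ (-(1 / p.toReal))| + |2 ^ (-(1 / p.toReal))| = 2 ^ (1 - 1 / p.toReal) := by
      rw [abs_of_pos (by positivity), two_rpow_neg_add_self]
    refine ⟨_, _, pairNorm_orderAgreement_pairVec_le_one hφ e hαβ, pairVec_apply _ _ _,
      pairVec_apply _ _ _, by simpa using hcc, by simpa using hcc, fun ξ hξ => ?_⟩
    rw [← hcc] at hξ
    simpa using hξ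
  · rintro hαβ ξ₁ hξ₁ ⟨x, y, hxy, hα, hβ⟩
    have hβα : (β, α) ∈ orderAgreement φ := (swap_mem_orderAgreement hφ).mpr hαβ
    linarith [add_le_pairNorm (x := x) (y := y) (e := e) hαβ,
      add_le_pairNorm (x := x) (y := y) (e := e) hβα]

/-- With `K` the unit ball of `‖(x,y)‖' = sup{‖x‖_p,‖y‖_p,|x_α|+|y_β| : (α,β) ∈ G}` on
`ℓ_p(Γ)²`: if `(α,β) ∉ G` then the element with `x_α = x_β = y_α = y_β = 2^{-1/p}` and
all other coordinates `0` lies in `K` and has `|x_α|+|y_α| = |x_β|+|y_β| = 2^{1-1/p}`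
(hence `> ξ` for any `ξ < 2^{1-1/p}`); conversely if `(α,β) ∈ G` with `α ≠ β` then no
`(x,y) ∈ K` has both `|x_α|+|y_α| > ξ₁` and `|x_β|+|y_β| > ξ₁` for any `ξ₁ > 1`. -/
theorem stmt16 (Γ : Type*) (p : ℝ≥0∞) [Fact (1 ≤ p)] (hp : 1 < p) (hp' : p ≠ ⊤)
    (W : Type*) [LinearOrder W] [WellFoundedLT W] (hcard : #W = aleph 1) (e : W ↪ Γ)
    (φ : W → ℝ) (hφ : Function.Injective φ)
    (G : Set (W × W)) (hG : G = {q : W × W | φ q.1 < φ q.2 ↔ q.1 ≤ q.2})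
    (N : lp (fun _ : Γ => ℝ) p → lp (fun _ : Γ => ℝ) p → ℝ)
    (hN : ∀ x y, N x y
      = sSup ({‖x‖, ‖y‖} ∪ {t : ℝ | ∃ q ∈ G, t = |x.1 (e q.1)| + |y.1 (e q.2)|}))
    (α β : W) (hαβ : α ≠ β) :
    ((α, β) ∉ G →
      ∃ x y : lp (fun _ : Γ => ℝ) p,
        N x y ≤ 1 ∧
        (∀ γ, x.1 γ = if γ = e α ∨ γ = e β then (2 : ℝ) ^ (-(1 / p.toReal)) else 0) ∧
        (∀ γ, y.1 γ = if γ = e α ∨ γ = e β then (2 : ℝ) ^ (-(1 / p.toReal)) else 0) ∧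
        |x.1 (e α)| + |y.1 (e α)| = (2 : ℝ) ^ (1 - 1 / p.toReal) ∧
        |x.1 (e β)| + |y.1 (e β)| = (2 : ℝ) ^ (1 - 1 / p.toReal) ∧
        ∀ ξ : ℝ, ξ < (2 : ℝ) ^ (1 - 1 / p.toReal) →
          ξ < |x.1 (e α)| + |y.1 (e α)| ∧ ξ < |x.1 (e β)| + |y.1 (e β)|) ∧
    ((α, β) ∈ G → ∀ ξ₁ : ℝ, 1 < ξ₁ →
      ¬ ∃ x y : lp (fun _ : Γ => ℝ) p,
        N x y ≤ 1 ∧ ξ₁ < |x.1 (e α)| + |y.1 (e α)| ∧ ξ₁ < |x.1 (e β)| + |y.1 (e β)|) :=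
  stmt16_general Γ p W e φ hφ G hG N hN α β
end

section
/- Let K be a compact space. Suppose there exist open families {U_α}_{α<ω_1}, {V_α}_{α<ω_1} with closure(U_α) ⊆ V_α such that for all α ≠ β: U_α ∩ U_β = ∅ ⟺ V_α ∩ V_β = ∅ ⟺ (α,β) ∈ G, where G = {(α,β) : φ(α) < φ(β) ↔ α ≤ β} for some injective φ : ω_1 → ℝ. Then K does not have property (Q). -/
open Cardinal

universe u

/-- Property (Q) of Bell. -/
def PropertyQ (K : Type u) [TopologicalSpace K] : Prop :=
  ∀ c : Cardinal.{u}, aleph0 < c → c.IsRegular →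
    ∀ (ι : Type u) (U V : ι → Set K), #ι = c →
      (∀ i, IsOpen (U i)) → (∀ i, IsOpen (V i)) → (∀ i, closure (U i) ⊆ V i) →
      (∃ A : Set ι, #A = c ∧ A.Pairwise fun i j => Disjoint (U i) (U j)) ∨
      (∃ A : Set ι, #A = c ∧ A.Pairwise fun i j => (V i ∩ V j).Nonempty)

/-- A linear order that is well-founded and embeds strictly monotonically into `ℝ`
is countable. -/
lemma aux_countable {β : Type*} [LinearOrder β] [WellFoundedLT β] {f : β → ℝ}
    (hf : StrictMono f) : Countable β := by
  have hS : Set.Countable {x : β | ∃ z, f x < z ∧ ∀ y, x < y → z ≤ f y} :=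
    countable_image_lt_image_Ioi f
  have hsub : {x : β | ∃ y, x < y} ⊆ {x : β | ∃ z, f x < z ∧ ∀ y, x < y → z ≤ f y} := by
    rintro x ⟨y, hy⟩
    have hne : {y : β | x < y}.Nonempty := ⟨y, hy⟩
    obtain ⟨m, hm, hmin⟩ := (IsWellFounded.wf (r := (· < · : β → β → Prop))).has_min _ hne
    exact ⟨f m, hf hm, fun y' hy' => hf.monotone (not_lt.1 (hmin y' hy'))⟩
  have hT : Set.Countable {x : β | ¬ ∃ y, x < y} := by
    apply Set.Subsingleton.countable
    intro a ha b hb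
    by_contra hne
    rcases lt_or_gt_of_ne hne with h | h
    · exact ha ⟨b, h⟩
    · exact hb ⟨a, h⟩
  rw [← Set.countable_univ_iff]
  refine Set.Countable.mono ?_ ((hS.mono hsub).union hT)
  intro x _
  by_cases h : ∃ y, x < y
  · exact Or.inl h
  · exact Or.inr h

/-- If a compact space `K` carries families `{U_α}, {V_α}` indexed by `ω₁` (a well-ordered
type of cardinality `ℵ₁`) with `closure (U_α) ⊆ V_α` and, for `α ≠ β`,
`U_α ∩ U_β = ∅ ⟺ V_α ∩ V_β = ∅ ⟺ (α,β) ∈ G`, where `G` comes from an injective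
`φ : ω₁ → ℝ`, then `K` does not have property (Q). -/
theorem stmt18 (K : Type u) [TopologicalSpace K] [CompactSpace K]
    (W : Type u) [LinearOrder W] [WellFoundedLT W] (hcard : #W = aleph 1)
    (φ : W → ℝ) (hφ : Function.Injective φ)
    (G : Set (W × W)) (hG : G = {q : W × W | φ q.1 < φ q.2 ↔ q.1 ≤ q.2})
    (U V : W → Set K) (hU : ∀ α, IsOpen (U α)) (hV : ∀ α, IsOpen (V α))
    (hUV : ∀ α, closure (U α) ⊆ V α)
    (hdisj : ∀ α β : W, α ≠ β → ((Disjoint (U α) (U β) ↔ (α, β) ∈ G) ∧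
      (Disjoint (V α) (V β) ↔ (α, β) ∈ G))) :
    ¬ PropertyQ K := by
  intro hQ
  have key := hQ (aleph 1) aleph0_lt_aleph_one isRegular_aleph_one W U V hcard hU hV hUV
  have wfA : ∀ A : Set W, WellFoundedLT A := fun A => Subtype.wellFoundedLT _
  -- In either case we get an uncountable A with φ strictly monotone (or antitone) on it,
  -- contradicting countability.
  have contra : ∀ (A : Set W), #A = aleph 1 → ∀ f : A → ℝ,
      StrictMono f → False := by
    intro A hA f hf
    have : Countable A := aux_countable hf
    have : #A ≤ aleph0 := Cardinal.mk_le_aleph0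
    rw [hA] at this
    exact absurd this (not_le.2 aleph0_lt_aleph_one)
  rcases key with ⟨A, hA, hpw⟩ | ⟨A, hA, hpw⟩
  · -- pairwise disjoint U's: φ strictly increasing on A
    refine contra A hA (fun a => φ a) ?_
    intro a b hab
    have hne : (a : W) ≠ b := fun h => (Subtype.coe_lt_coe.2 hab).ne (by exact_mod_cast h)
    have hG1 : ((a : W), (b : W)) ∈ G :=
      ((hdisj a b hne).1).1 (hpw a.2 b.2 hne)
    rw [hG] at hG1
    exact hG1.2 (le_of_lt hab)
  · -- pairwise intersecting V's: φ strictly decreasing on A, so -φ strictly increasing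
    refine contra A hA (fun a => -φ a) ?_
    intro a b hab
    have hne : (a : W) ≠ b := fun h => (Subtype.coe_lt_coe.2 hab).ne (by exact_mod_cast h)
    have hG1 : ((a : W), (b : W)) ∉ G := by
      intro hmem
      have hd : Disjoint (V a) (V b) := ((hdisj a b hne).2).2 hmem
      exact (Set.not_disjoint_iff_nonempty_inter.2 (hpw a.2 b.2 hne)) hd
    rw [hG] at hG1
    have h1 : ¬ φ (a : W) < φ b := fun h => hG1 ⟨fun _ => le_of_lt hab, fun _ => h⟩
    have h2 : φ (b : W) ≠ φ a := fun h => hne (hφ h).symm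
    have : φ (b : W) < φ a := lt_of_le_of_ne (not_lt.1 h1) h2
    simpa using neg_lt_neg this
end
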